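/- arXiv:1601.00888 — 4 statements merged into one kernel-verified Lean document; each statement's English description precedes it below -/
import Mathlib

section
/- Let X be a hyperinner product space over ℝ. Then (u,u) ≤ a²(x,x) for every u ∈ a∘x, x ∈ X, a ∈ ℝ with a ≠ 0. -/
open scoped BigOperators

/-- A weak hypervector space over `F` (ℝ or ℂ): a commutative hypergroup `(X, #)`
together with a scalar hyperproduct `∘ : F × X → P*(X)`. -/
structure WeakHVS (F : Type*) [RCLike F] (X : Type*) where
  hop : X → X → Set X
  hop_nonempty : ∀ x y, (hop x y).Nonempty
  zero : X
  neg : X → X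
  comm : ∀ x y, hop x y = hop y x
  hassoc : ∀ x y z,
    ((⋃ u ∈ hop x y, hop u z) ∩ (⋃ v ∈ hop y z, hop x v)).Nonempty
  zero_mem : ∀ x, zero ∈ hop x (neg x) ∧ zero ∈ hop (neg x) x
  neg_unique : ∀ x y, zero ∈ hop x y → zero ∈ hop y x → y = neg x
  zero_unique : ∀ z : X, (∀ x, ∃! y, z ∈ hop x y ∧ z ∈ hop y x) → z = zero
  hmem : ∀ x y, x ∈ (⋃ u ∈ hop x y, hop u (neg y)) ∩ hop x zero
  smul : F → X → Set X
  smul_nonempty : ∀ a x, (smul a x).Nonempty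
  /-- (1) weak right distributivity -/
  distrib_r : ∀ (a : F) (x y : X),
    ((⋃ u ∈ hop x y, smul a u) ∩ (⋃ u ∈ smul a x, ⋃ v ∈ smul a y, hop u v)).Nonempty
  /-- (2) weak left distributivity -/
  distrib_l : ∀ (a b : F) (x : X),
    ((smul (a + b) x) ∩ (⋃ u ∈ smul a x, ⋃ v ∈ smul b x, hop u v)).Nonempty
  /-- (3) -/
  smul_assoc : ∀ (a b : F) (x : X), (⋃ y ∈ smul b x, smul a y) = smul (a * b) x
  /-- (4) -/
  smul_neg : ∀ (a : F) (x : X),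
    smul a (neg x) = smul (-a) x ∧ smul (-a) x = neg '' smul a x
  /-- (5) -/
  one_smul_mem : ∀ x, x ∈ smul 1 x


/-- A hyperinner product space: a weak hypervector space with an inner product
satisfying axioms (1)–(7) of Definition 3.8, with chosen essential points
`essAdd x y = e_{x#y}` and `essSmul a x = e_{a∘x}`. -/
structure HyperInnerSpace (F : Type*) [RCLike F] (X : Type*) extends WeakHVS F X where
  ip : X → X → F
  /-- (1) -/
  ip_pos : ∀ x, x ≠ zero → 0 < RCLike.re (ip x x)
  /-- (2) -/
  ip_self_eq_zero : ∀ x, ip x x = 0 ↔ x = zero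
  essAdd : X → X → X
  essAdd_spec : ∀ x y,
    (zero ∈ hop x y ∧ essAdd x y = zero) ∨
    (zero ∉ hop x y ∧ essAdd x y ∈ hop x y ∧ x ∈ hop (essAdd x y) (neg y))
  /-- (3) -/
  ip_add : ∀ x y z, ip x z + ip y z = ip (essAdd x y) z
  /-- (4) -/
  ip_conj_symm : ∀ x y, ip y x = starRingEnd F (ip x y)
  essSmul : F → X → X
  essSmul_spec : ∀ (a : F) (x : X),
    (a = 0 ∧ essSmul a x = zero) ∨
    (a ≠ 0 ∧ essSmul a x ∈ smul a x ∧ x ∈ smul a⁻¹ (essSmul a x))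
  /-- (5) -/
  ip_smul : ∀ (a : F) (x y : X), a * ip x y = ip (essSmul a x) y
  /-- (6) -/
  ip_le_essAdd : ∀ x y, ∀ u ∈ hop x y,
    RCLike.re (ip u u) ≤ RCLike.re (ip (essAdd x y) (essAdd x y))
  /-- (7) -/
  ip_le_one_smul : ∀ x, ∀ u ∈ smul 1 x, RCLike.re (ip u u) ≤ RCLike.re (ip x x)

/-! The essential point `e` of `a⁻¹∘u` lies in `a⁻¹∘(a∘x) = 1∘x`, so axiom (7) gives
`(e, e) ≤ (x, x)`, while axiom (5) and symmetry give `(e, e) = a⁻² (u, u)`. -/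

namespace HyperInnerSpace

variable {F : Type*} [RCLike F] {X : Type*} (H : HyperInnerSpace F X)

theorem essSmul_inv_mem_one_smul {a : F} (ha : a ≠ 0) {x u : X} (hu : u ∈ H.smul a x) :
    H.essSmul a⁻¹ u ∈ H.smul 1 x := by
  rcases H.essSmul_spec a⁻¹ u with ⟨ha', -⟩ | ⟨-, he, -⟩
  · exact absurd (inv_eq_zero.mp ha') ha
  · rw [← inv_mul_cancel₀ ha, ← H.smul_assoc]
    exact Set.mem_biUnion hu he

theorem ip_self_conj (x : X) : starRingEnd F (H.ip x x) = H.ip x x :=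
  (H.ip_conj_symm x x).symm

theorem ip_essSmul_self (a : F) (x : X) :
    H.ip (H.essSmul a x) (H.essSmul a x) = a * starRingEnd F a * H.ip x x := by
  set e := H.essSmul a x
  have hxe : H.ip x e = starRingEnd F a * H.ip x x := by
    rw [H.ip_conj_symm e x, ← H.ip_smul, map_mul, H.ip_self_conj]
  rw [← H.ip_smul, hxe, mul_assoc]

end HyperInnerSpace

theorem HyperInnerSpace.ip_essSmul_self_real {X : Type*} (H : HyperInnerSpace ℝ X) (a : ℝ)
    (x : X) : H.ip (H.essSmul a x) (H.essSmul a x) = a ^ 2 * H.ip x x := by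
  rw [H.ip_essSmul_self, RCLike.conj_to_real, sq]

/-- Over ℝ: `(u, u) ≤ a² (x, x)` for every `u ∈ a∘x`, `a ≠ 0`. -/
theorem ip_smul_sq_bound {X : Type*} (H : HyperInnerSpace ℝ X)
    (a : ℝ) (ha : a ≠ 0) (x : X) :
    ∀ u ∈ H.smul a x, H.ip u u ≤ a ^ 2 * H.ip x x := by
  intro u hu
  set e := H.essSmul a⁻¹ u
  have he_le : H.ip e e ≤ H.ip x x := H.ip_le_one_smul x e (H.essSmul_inv_mem_one_smul ha hu)
  have hu_eq : H.ip u u = a ^ 2 * H.ip e e := by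
    rw [H.ip_essSmul_self_real, ← mul_assoc, ← mul_pow, mul_inv_cancel₀ ha, one_pow, one_mul]
  rw [hu_eq]
  exact mul_le_mul_of_nonneg_left he_le (sq_nonneg a)
end

section
/- Let X be a hyperinner product space over F. Then a·(b∘x, y) = ((ab)∘x, y) for all a,b ∈ F with a ≠ 0 and all x,y ∈ X, where (A,y) = {(z,y) : z ∈ A}. -/
open scoped BigOperators

/-- `a·(b∘x, y) = ((ab)∘x, y)` for `a ≠ 0`, where `(A, y) = {(z, y) : z ∈ A}`. -/
theorem smul_ip_set_eq {F X : Type*} [RCLike F] (H : HyperInnerSpace F X)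
    (a b : F) (ha : a ≠ 0) (x y : X) :
    (fun z => a * H.ip z y) '' H.smul b x = (fun z => H.ip z y) '' H.smul (a * b) x := by
  have hess : ∀ (c : F), c ≠ 0 → ∀ z : X, H.essSmul c z ∈ H.smul c z := by
    intro c hc z
    rcases H.essSmul_spec c z with ⟨h, _⟩ | ⟨_, h, _⟩
    · exact absurd h hc
    · exact h
  ext t
  constructor
  · rintro ⟨z, hz, rfl⟩
    refine ⟨H.essSmul a z, ?_, (H.ip_smul a z y).symm⟩
    rw [← H.smul_assoc a b x]
    exact Set.mem_biUnion hz (hess a ha z)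
  · rintro ⟨w, hw, rfl⟩
    have hinv : (a⁻¹ : F) ≠ 0 := inv_ne_zero ha
    refine ⟨H.essSmul a⁻¹ w, ?_, ?_⟩
    · have : H.essSmul a⁻¹ w ∈ H.smul (a⁻¹ * (a * b)) x := by
        rw [← H.smul_assoc a⁻¹ (a * b) x]
        exact Set.mem_biUnion hw (hess a⁻¹ hinv w)
      rwa [inv_mul_cancel_left₀ ha] at this
    · have := H.ip_smul a⁻¹ w y
      rcases H.essSmul_spec a⁻¹ w with ⟨h, _⟩ | ⟨_, _, _⟩
      · exact absurd h hinv
      · simp only []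
        rw [← this, ← mul_assoc, mul_inv_cancel₀ ha, one_mul]
end

section
/- Let X be a hyperinner product space over F and define ‖x‖ = √(x,x). Then the Cauchy–Schwarz inequality holds: |(x,y)| ≤ ‖x‖·‖y‖ for all x, y ∈ X. -/
open scoped BigOperators

/-- Cauchy–Schwarz: `|(x, y)| ≤ ‖x‖ ‖y‖` with `‖x‖ = √(x, x)`. -/
theorem hip_cauchy_schwarz {F X : Type*} [RCLike F] (H : HyperInnerSpace F X) (x y : X) :
    ‖H.ip x y‖ ≤
      Real.sqrt (RCLike.re (H.ip x x)) * Real.sqrt (RCLike.re (H.ip y y)) := by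

  classical
  have hzero : ∀ z, H.ip H.zero z = 0 := by
    intro z
    have h := H.ip_smul 0 x z
    rcases H.essSmul_spec 0 x with ⟨_, h2⟩ | ⟨h1, _⟩
    · rw [h2] at h; simpa using h.symm
    · exact absurd rfl h1
  have hzero' : ∀ z, H.ip z H.zero = 0 := by
    intro z; rw [H.ip_conj_symm]; simp [hzero]
  have hnn : ∀ u, 0 ≤ RCLike.re (H.ip u u) := by
    intro u
    by_cases hu : u = H.zero
    · simp [hu, hzero]
    · exact (H.ip_pos u hu).le
  -- key quadratic inequality
  have key : ∀ a b : F, 0 ≤ RCLike.re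
      (a * (starRingEnd F) (a * H.ip x x + b * H.ip y x)
      + b * (starRingEnd F) (a * H.ip x y + b * H.ip y y)) := by
    intro a b
    set u := H.essAdd (H.essSmul a x) (H.essSmul b y) with hu
    have hipu : ∀ z, H.ip u z = a * H.ip x z + b * H.ip y z := by
      intro z
      rw [hu, ← H.ip_add, ← H.ip_smul, ← H.ip_smul]
    have huu : H.ip u u
        = a * (starRingEnd F) (a * H.ip x x + b * H.ip y x)
        + b * (starRingEnd F) (a * H.ip x y + b * H.ip y y) := by
      rw [hipu u, H.ip_conj_symm u x, H.ip_conj_symm u y, hipu x, hipu y]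
    rw [← huu]
    exact hnn u
  set A := RCLike.re (H.ip x x) with hA
  set T := RCLike.re (H.ip y y) with hT
  have hA0 : 0 ≤ A := hnn x
  have hT0 : 0 ≤ T := hnn y
  by_cases hy : y = H.zero
  · rw [hy, hzero']
    simpa using mul_nonneg (Real.sqrt_nonneg A) (Real.sqrt_nonneg T)
  · have hTpos : 0 < T := H.ip_pos y hy
    have hconjyy : (starRingEnd F) (H.ip y y) = H.ip y y := (H.ip_conj_symm y y).symm
    have hyy : H.ip y y = (T : F) := by
      rw [RCLike.ext_iff]
      refine ⟨by simp [hT], ?_⟩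
      have him := congrArg RCLike.im hconjyy
      simp only [RCLike.conj_im] at him
      simp only [RCLike.ofReal_im]
      linarith
    set N := ‖H.ip x y‖ ^ 2 with hN
    have hN0 : 0 ≤ N := by positivity
    have hconjxy : (starRingEnd F) (H.ip x y) = H.ip y x := (H.ip_conj_symm x y).symm
    have hconjyx : (starRingEnd F) (H.ip y x) = H.ip x y := by
      rw [← hconjxy, RCLike.conj_conj]
    have hconjxx : (starRingEnd F) (H.ip x x) = H.ip x x := (H.ip_conj_symm x x).symm
    have hmulconj : H.ip x y * H.ip y x = (N : F) := by
      rw [← hconjxy, RCLike.mul_conj, hN]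
      push_cast
      ring
    have hkey := key (T : F) (-(H.ip x y))
    have hexpr : (T : F) * (starRingEnd F) ((T : F) * H.ip x x + -(H.ip x y) * H.ip y x)
        + -(H.ip x y) * (starRingEnd F) ((T : F) * H.ip x y + -(H.ip x y) * H.ip y y)
        = ((T * T : ℝ) : F) * H.ip x x - ((T * N : ℝ) : F) := by
      simp only [hyy, map_add, map_mul, map_neg, RCLike.conj_ofReal, hconjxy, hconjyx,
        hconjxx]
      linear_combination (-(T : F)) * hmulconj
    rw [hexpr] at hkey
    rw [map_sub, RCLike.re_ofReal_mul, RCLike.ofReal_re, ← hA] at hkey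
    have hNTA : N ≤ T * A := by
      have h1 : T * N ≤ T * (T * A) := by nlinarith
      exact le_of_mul_le_mul_left h1 hTpos
    rw [← Real.sqrt_mul hA0, ← Real.sqrt_sq (norm_nonneg (H.ip x y))]
    exact Real.sqrt_le_sqrt (by nlinarith)
end

section
/- Let X be a hyperinner product space over F and set ‖x‖ = √(x,x). Then sup‖x # y‖ ≤ ‖x‖ + ‖y‖ for all x, y ∈ X (triangle inequality for the induced norm). -/
open scoped BigOperators

section Aux

variable {F X : Type*} [RCLike F] (H : HyperInnerSpace F X)

lemma HyperInnerSpace.essSmul_zero (x : X) : H.essSmul (0:F) x = H.zero := by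
  rcases H.essSmul_spec 0 x with ⟨_, h⟩ | ⟨h, _⟩
  · exact h
  · exact absurd rfl h

lemma HyperInnerSpace.ip_zero_left (y : X) : H.ip H.zero y = 0 := by
  have h := H.ip_smul (0:F) y y
  rw [H.essSmul_zero] at h
  simpa using h.symm

lemma HyperInnerSpace.conj_ip_self (x : X) :
    (starRingEnd F) (H.ip x x) = H.ip x x := (H.ip_conj_symm x x).symm

lemma HyperInnerSpace.re_ip_nonneg (x : X) : 0 ≤ RCLike.re (H.ip x x) := by
  by_cases h : x = H.zero
  · subst h
    rw [(H.ip_self_eq_zero H.zero).mpr rfl]; simp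
  · exact le_of_lt (H.ip_pos x h)

lemma HyperInnerSpace.ip_expand (x w u : X) :
    H.ip (H.essAdd x w) u = H.ip x u + H.ip w u := (H.ip_add x w u).symm

lemma HyperInnerSpace.cs (x y : X) :
    ‖H.ip x y‖ ^ 2 ≤ RCLike.re (H.ip x x) * RCLike.re (H.ip y y) := by
  by_cases hy : y = H.zero
  · have hc : H.ip x y = 0 := by
      rw [H.ip_conj_symm y x, hy, H.ip_zero_left]; simp
    rw [hc]
    simpa using mul_nonneg (H.re_ip_nonneg x) (H.re_ip_nonneg y)
  · set A := H.ip x x with hA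
    set B := H.ip y y with hBdef
    set c := H.ip x y with hc
    have hB0 : B ≠ 0 := fun h => hy ((H.ip_self_eq_zero y).mp h)
    have hBre : 0 < RCLike.re B := H.ip_pos y hy
    have hBreal : ((RCLike.re B : ℝ) : F) = B := by
      rw [← RCLike.conj_eq_iff_re]; exact H.conj_ip_self y
    set t : F := -(c / B) with ht
    set z := H.essAdd x (H.essSmul t y) with hzdef
    have h1 : ∀ u, H.ip z u = H.ip x u + t * H.ip y u := by
      intro u
      rw [hzdef, H.ip_expand, ← H.ip_smul]
    have hxz : H.ip x z = starRingEnd F (H.ip z x) := H.ip_conj_symm z x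
    have hyz : H.ip y z = starRingEnd F (H.ip z y) := H.ip_conj_symm z y
    have hzz : H.ip z z =
        A + starRingEnd F t * c + t * starRingEnd F c + t * starRingEnd F t * B := by
      rw [h1 z, hxz, hyz, h1 x, h1 y, map_add, map_add, map_mul, map_mul,
        H.conj_ip_self x, ← hc]
      have : starRingEnd F (H.ip y x) = c := by
        rw [← H.ip_conj_symm y x]
      rw [this, H.conj_ip_self y]
      ring
    have hzz' : H.ip z z = A - c * starRingEnd F c / B := by
      rw [hzz, ht]
      have hcB : starRingEnd F B = B := H.conj_ip_self y
      rw [map_neg, map_div₀, hcB]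
      field_simp
      ring
    have hpos : 0 ≤ RCLike.re (H.ip z z) := H.re_ip_nonneg z
    rw [hzz'] at hpos
    have hmc : c * starRingEnd F c = ((‖c‖ ^ 2 : ℝ) : F) := by
      rw [RCLike.mul_conj]; norm_cast
    rw [hmc, ← hBreal] at hpos
    have hdiv : ((‖c‖ ^ 2 : ℝ) : F) / ((RCLike.re B : ℝ) : F)
        = (((‖c‖ ^ 2 / RCLike.re B : ℝ)) : F) := by
      norm_cast
    rw [hdiv, map_sub, RCLike.ofReal_re] at hpos
    have : ‖c‖ ^ 2 / RCLike.re B ≤ RCLike.re A := by linarith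
    calc ‖c‖ ^ 2 = (‖c‖ ^ 2 / RCLike.re B) * RCLike.re B := by
            field_simp
      _ ≤ RCLike.re A * RCLike.re B :=
            mul_le_mul_of_nonneg_right this (le_of_lt hBre)

end Aux

/-- Triangle inequality: `sup‖x # y‖ ≤ ‖x‖ + ‖y‖` with `‖x‖ = √(x, x)`. -/
theorem sSup_nrm_hop_le {F X : Type*} [RCLike F] (H : HyperInnerSpace F X) (x y : X) :
    sSup ((fun u => Real.sqrt (RCLike.re (H.ip u u))) '' H.hop x y) ≤
      Real.sqrt (RCLike.re (H.ip x x)) + Real.sqrt (RCLike.re (H.ip y y)) := by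
  set rA := RCLike.re (H.ip x x) with hrA
  set rB := RCLike.re (H.ip y y) with hrB
  set s := Real.sqrt rA + Real.sqrt rB with hs
  have hs0 : 0 ≤ s := add_nonneg (Real.sqrt_nonneg _) (Real.sqrt_nonneg _)
  set e := H.essAdd x y with he
  set c := H.ip x y with hc
  -- expand ip e e
  have hee : RCLike.re (H.ip e e) = rA + rB + 2 * RCLike.re c := by
    have h1 : ∀ u, H.ip e u = H.ip x u + H.ip y u := fun u => H.ip_expand x y u
    have : H.ip e e = H.ip x x + H.ip x y + (starRingEnd F c + H.ip y y) := by
      rw [h1 e, H.ip_conj_symm e x, H.ip_conj_symm e y, h1 x, h1 y,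
        map_add, map_add, H.conj_ip_self x, H.conj_ip_self y, ← H.ip_conj_symm y x]
      try ring
    rw [this]
    simp [map_add, RCLike.conj_re]
    try ring
  have hcnorm : ‖c‖ ≤ Real.sqrt rA * Real.sqrt rB := by
    have h2 := H.cs x y
    have : ‖c‖ = Real.sqrt (‖c‖ ^ 2) := by
      rw [Real.sqrt_sq (norm_nonneg _)]
    rw [this, ← Real.sqrt_mul (H.re_ip_nonneg x)]
    exact Real.sqrt_le_sqrt h2
  have heineq : RCLike.re (H.ip e e) ≤ s ^ 2 := by
    have hrc : RCLike.re c ≤ ‖c‖ := RCLike.re_le_norm c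
    have hsq : s ^ 2 = rA + rB + 2 * (Real.sqrt rA * Real.sqrt rB) := by
      rw [hs, add_sq, Real.sq_sqrt (H.re_ip_nonneg x), Real.sq_sqrt (H.re_ip_nonneg y)]
      ring
    rw [hee, hsq]
    nlinarith [hcnorm, hrc]
  apply Real.sSup_le _ hs0
  rintro a ⟨u, hu, rfl⟩
  have h6 := H.ip_le_essAdd x y u hu
  have : RCLike.re (H.ip u u) ≤ s ^ 2 := le_trans h6 heineq
  calc Real.sqrt (RCLike.re (H.ip u u)) ≤ Real.sqrt (s ^ 2) := Real.sqrt_le_sqrt this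
    _ = s := Real.sqrt_sq hs0
end
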